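/- arXiv:math-ph/0602018 — 3 statements merged into one kernel-verified Lean document; each statement's English description precedes it below -/
import Mathlib

section
/- For all β₁, β₂ ∈ ℝ³ with ‖β₁‖ < 1 and ‖β₂‖ < 1, the composed velocity β₁ ⋆ β₂ satisfies 1 − ‖β₁ ⋆ β₂‖² = (1 − ‖β₁‖²)(1 − ‖β₂‖²)/(1 + β₁·β₂)²; in particular ‖β₁ ⋆ β₂‖ < 1 (the open unit ball is closed under ⋆) and γ(β₁ ⋆ β₂) = γ(β₁)·γ(β₂)·(1 + β₁·β₂). -/
open Matrix

noncomputable section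

/-- Euclidean dot product on `ℝ³`. -/
def dot3 (u v : Fin 3 → ℝ) : ℝ := ∑ i, u i * v i

/-- The Lorentz factor `γ(β) = 1/√(1 - ‖β‖²)`. -/
def gam (β : Fin 3 → ℝ) : ℝ := 1 / Real.sqrt (1 - dot3 β β)

/-- The Lorentz boost with velocity `β`, as a 4×4 matrix over `Unit ⊕ Fin 3`
(the `Unit` index is the time coordinate): time-time entry `γ`, time-space and
space-time entries `γ βᵢ`, space-space entries `δᵢⱼ + (γ²/(1+γ)) βᵢ βⱼ`. -/
def boost (β : Fin 3 → ℝ) : Matrix (Unit ⊕ Fin 3) (Unit ⊕ Fin 3) ℝ :=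
  Matrix.fromBlocks (Matrix.of fun _ _ => gam β)
    (Matrix.of fun _ j => gam β * β j)
    (Matrix.of fun i _ => gam β * β i)
    ((1 : Matrix (Fin 3) (Fin 3) ℝ) + ((gam β) ^ 2 / (1 + gam β)) • Matrix.vecMulVec β β)

/-- The spatial rotation `R(D) = diag(1, D)` as a 4×4 matrix. -/
def rot (D : Matrix (Fin 3) (Fin 3) ℝ) : Matrix (Unit ⊕ Fin 3) (Unit ⊕ Fin 3) ℝ :=
  Matrix.fromBlocks 1 0 0 D

/-- Relativistic composition of velocities:
`β₁ ⋆ β₂ = [β₁ + γ₁⁻¹ β₂ + (γ₁/(1+γ₁)) (β₁·β₂) β₁] / (1 + β₁·β₂)`. -/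
def vcomp (β₁ β₂ : Fin 3 → ℝ) : Fin 3 → ℝ :=
  (1 / (1 + dot3 β₁ β₂)) •
    (β₁ + (gam β₁)⁻¹ • β₂ + (gam β₁ / (1 + gam β₁)) • dot3 β₁ β₂ • β₁)

end

lemma dot3_comm' (u v : Fin 3 → ℝ) : dot3 u v = dot3 v u := by
  simp [dot3, mul_comm]

lemma dot3_nonneg' (u : Fin 3 → ℝ) : 0 ≤ dot3 u u :=
  Finset.sum_nonneg fun i _ => mul_self_nonneg _

lemma dot3_add_left' (u v w : Fin 3 → ℝ) : dot3 (u + v) w = dot3 u w + dot3 v w := by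
  simp [dot3, add_mul, Finset.sum_add_distrib]

lemma dot3_add_right' (u v w : Fin 3 → ℝ) : dot3 u (v + w) = dot3 u v + dot3 u w := by
  simp [dot3, mul_add, Finset.sum_add_distrib]

lemma dot3_smul_left' (c : ℝ) (u v : Fin 3 → ℝ) : dot3 (c • u) v = c * dot3 u v := by
  simp [dot3, Finset.mul_sum, mul_assoc]

lemma dot3_smul_right' (c : ℝ) (u v : Fin 3 → ℝ) : dot3 u (c • v) = c * dot3 u v := by
  simp [dot3, Finset.mul_sum]; ring_nf; simp [mul_comm, mul_left_comm]

lemma dot3_cs (u v : Fin 3 → ℝ) : (dot3 u v) ^ 2 ≤ dot3 u u * dot3 v v := by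
  have := Finset.sum_mul_sq_le_sq_mul_sq Finset.univ u v
  simpa [dot3, sq] using this

/-- Key identity for the composed velocity:
`1 - ‖β₁ ⋆ β₂‖² = (1-‖β₁‖²)(1-‖β₂‖²)/(1+β₁·β₂)²`; in particular the open unit
ball is closed under `⋆` and `γ(β₁ ⋆ β₂) = γ(β₁) γ(β₂) (1 + β₁·β₂)`. -/
theorem vcomp_norm_sq (β₁ β₂ : Fin 3 → ℝ)
    (h₁ : dot3 β₁ β₁ < 1) (h₂ : dot3 β₂ β₂ < 1) :
    1 - dot3 (vcomp β₁ β₂) (vcomp β₁ β₂) =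
      (1 - dot3 β₁ β₁) * (1 - dot3 β₂ β₂) / (1 + dot3 β₁ β₂) ^ 2 ∧
    dot3 (vcomp β₁ β₂) (vcomp β₁ β₂) < 1 ∧
    gam (vcomp β₁ β₂) = gam β₁ * gam β₂ * (1 + dot3 β₁ β₂) := by
  set d11 := dot3 β₁ β₁ with hd11def
  set d22 := dot3 β₂ β₂ with hd22def
  set d12 := dot3 β₁ β₂ with hd12def
  have h11 : 0 ≤ d11 := dot3_nonneg' β₁
  have h22 : 0 ≤ d22 := dot3_nonneg' β₂
  have hcs : d12 ^ 2 ≤ d11 * d22 := dot3_cs β₁ β₂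
  have hd12lt : d12 ^ 2 < 1 := lt_of_le_of_lt hcs (by nlinarith)
  have hpos : 0 < 1 + d12 := by nlinarith
  set s := Real.sqrt (1 - d11) with hsdef
  have hs : 0 < s := Real.sqrt_pos.mpr (by linarith)
  have hs2 : s ^ 2 = 1 - d11 := Real.sq_sqrt (by linarith)
  have hg : gam β₁ = 1 / s := rfl
  have h1g : (0:ℝ) < 1 + gam β₁ := by
    rw [hg]; positivity
  have hdvv : dot3 (vcomp β₁ β₂) (vcomp β₁ β₂) =
      (1 / (1 + d12)) ^ 2 * ((1 + (1/s) / (1 + 1/s) * d12) ^ 2 * d11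
        + 2 * (1 + (1/s) / (1 + 1/s) * d12) * s * d12 + s ^ 2 * d22) := by
    have hsne : s ≠ 0 := ne_of_gt hs
    have hginv : (gam β₁)⁻¹ = s := by rw [hg]; field_simp
    simp only [vcomp, ← hd12def, hg, hginv, dot3_smul_left', dot3_smul_right',
      dot3_add_left', dot3_add_right', ← hd11def, ← hd22def, dot3_comm' β₂ β₁, ← hd12def, one_div, inv_inv]
    ring
  have key : 1 - dot3 (vcomp β₁ β₂) (vcomp β₁ β₂) =
      (1 - d11) * (1 - d22) / (1 + d12) ^ 2 := by
    rw [hdvv]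
    have hsne : s ≠ 0 := ne_of_gt hs
    have h1s : (1:ℝ) + 1/s ≠ 0 := by positivity
    have hpne : (1 + d12) ≠ 0 := ne_of_gt hpos
    have hd11' : d11 = 1 - s ^ 2 := by linarith
    rw [hd11']
    field_simp
    ring
  refine ⟨key, ?_, ?_⟩
  · have hrpos : 0 < (1 - d11) * (1 - d22) / (1 + d12) ^ 2 :=
      div_pos (mul_pos (by linarith) (by linarith)) (pow_pos hpos 2)
    linarith [key]
  · have hrpos : 0 < (1 - d11) * (1 - d22) / (1 + d12) ^ 2 :=
      div_pos (mul_pos (by linarith) (by linarith)) (pow_pos hpos 2)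
    rw [gam, key]
    have hs2' : Real.sqrt (1 - d22) ^ 2 = 1 - d22 := Real.sq_sqrt (by linarith)
    have hsqrt : Real.sqrt ((1 - d11) * (1 - d22) / (1 + d12) ^ 2)
        = s * Real.sqrt (1 - d22) / (1 + d12) := by
      rw [show (1 - d11) * (1 - d22) / (1 + d12) ^ 2
          = (s * Real.sqrt (1 - d22) / (1 + d12)) ^ 2 by
        rw [div_pow, mul_pow, hs2, hs2']]
      exact Real.sqrt_sq (by positivity)
    rw [hsqrt, hg, gam, ← hd22def]
    field_simp
end

section
/- Let β₁, β₂ ∈ ℝ³ with ‖β₁‖ < 1 and ‖β₂‖ < 1, and suppose D is a real 3×3 matrix such that B(β₁) * B(β₂) = B(β₁ ⋆ β₂) * R(D) (i.e. D is the Thomas rotation of the pair (β₁, β₂)). Then D maps the oppositely composed velocity to the composed velocity: D · (β₂ ⋆ β₁) = β₁ ⋆ β₂. -/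
open Matrix

/-!
Boosts are symmetric, so transposing `B(β₁) B(β₂) = B(v) R(D)`, `v = β₁ ⋆ β₂`, gives
`B(β₂) B(β₁) = R(Dᵀ) B(v)`. Apply both sides to the time axis `e₀`: a product of two boosts
sends `e₀` to `γ₂γ₁(1 + β₂·β₁) (1, β₂ ⋆ β₁)`, while `R(Dᵀ) B(v)` sends it to `γ(v) (1, Dᵀ v)`.
Hence `γ(v) = γ₂γ₁(1 + β₂·β₁) > 0`, so `‖v‖ < 1` (`gam` is `0` at speeds `≥ 1`), and
`Dᵀ v = β₂ ⋆ β₁`.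
Boosts of speed `< 1` preserve the Minkowski form `η = diag(1, -1, -1, -1)`, hence so does
`R(D) = B(v)⁻¹ B(β₁) B(β₂)`; that is, `D` is orthogonal, and `D (β₂ ⋆ β₁) = D Dᵀ v = v`.
-/

open LieAlgebra.Orthogonal

lemma dot3_eq_dotProduct (u v : Fin 3 → ℝ) : dot3 u v = u ⬝ᵥ v := rfl

lemma one_add_dot3_pos {β₁ β₂ : Fin 3 → ℝ} (h₁ : dot3 β₁ β₁ < 1) (h₂ : dot3 β₂ β₂ < 1) :
    0 < 1 + dot3 β₁ β₂ := by
  have hsum : 0 ≤ dot3 (β₁ + β₂) (β₁ + β₂) := Finset.sum_nonneg fun _ _ => mul_self_nonneg _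
  simp only [dot3_eq_dotProduct, add_dotProduct, dotProduct_add, dotProduct_comm β₂ β₁]
    at h₁ h₂ hsum ⊢
  linarith

lemma gam_pos_iff {β : Fin 3 → ℝ} : 0 < gam β ↔ dot3 β β < 1 := by
  rw [gam, one_div, inv_pos, Real.sqrt_pos, sub_pos]

lemma gam_sq_mul_one_sub_dot3 {β : Fin 3 → ℝ} (h : dot3 β β < 1) :
    gam β ^ 2 * (1 - dot3 β β) = 1 := by
  rw [gam, div_pow, one_pow, Real.sq_sqrt (by linarith), one_div_mul_cancel (by linarith)]

lemma gam_sq_div_one_add_gam_mul_dot3 {β : Fin 3 → ℝ} (h : dot3 β β < 1) :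
    gam β ^ 2 / (1 + gam β) * dot3 β β = gam β - 1 := by
  have hγ := gam_pos_iff.2 h
  rw [div_mul_eq_mul_div, div_eq_iff (by positivity)]
  linear_combination -gam_sq_mul_one_sub_dot3 h

lemma indefiniteDiagonal_eq_fromBlocks (p q R : Type*) [DecidableEq p] [DecidableEq q]
    [CommRing R] : indefiniteDiagonal p q R = fromBlocks 1 0 0 (-1) := by
  rw [indefiniteDiagonal, ← fromBlocks_diagonal, diagonal_one, ← diagonal_neg, diagonal_one]

lemma indefiniteDiagonal_mulVec {p q R : Type*} [Fintype p] [Fintype q] [DecidableEq p]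
    [DecidableEq q] [CommRing R] (t : p → R) (x : q → R) :
    indefiniteDiagonal p q R *ᵥ Sum.elim t x = Sum.elim t (-x) := by
  ext (i | i) <;> simp [indefiniteDiagonal, mulVec_diagonal]

local notation "η" => indefiniteDiagonal Unit (Fin 3) ℝ

lemma boost_transpose (β : Fin 3 → ℝ) : (boost β)ᵀ = boost β := by
  ext (i | i) (j | j) <;> simp [boost, vecMulVec_apply, one_apply, eq_comm, mul_comm]

lemma boost_mulVec (β : Fin 3 → ℝ) (t : ℝ) (x : Fin 3 → ℝ) :
    boost β *ᵥ Sum.elim (fun _ => t) x =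
      Sum.elim (fun _ => gam β * (t + dot3 β x))
        (x + (gam β * t + gam β ^ 2 / (1 + gam β) * dot3 β x) • β) := by
  rw [boost, fromBlocks_mulVec]
  congr 1
  · ext; simp [mulVec, dotProduct, dot3, Finset.mul_sum, mul_add, mul_assoc]
  · rw [add_mulVec, one_mulVec, smul_mulVec, vecMulVec_mulVec, op_smul_eq_smul]
    ext i
    simp only [Sum.elim_comp_inl, Sum.elim_comp_inr, mulVec, dotProduct, Finset.univ_unique,
      Finset.sum_singleton, of_apply, Pi.add_apply, Pi.smul_apply, smul_eq_mul, dot3]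
    ring

lemma boost_mulVec_timeAxis (β : Fin 3 → ℝ) :
    boost β *ᵥ Sum.elim (fun _ => 1) 0 = Sum.elim (fun _ => gam β) (gam β • β) := by
  simp [boost_mulVec, dot3_eq_dotProduct]

lemma boost_mul_boost_mulVec_timeAxis {β₁ β₂ : Fin 3 → ℝ} (hγ : gam β₁ ≠ 0)
    (hd : 1 + dot3 β₁ β₂ ≠ 0) :
    (boost β₁ * boost β₂) *ᵥ Sum.elim (fun _ => 1) 0 =
      Sum.elim (fun _ => gam β₁ * gam β₂ * (1 + dot3 β₁ β₂))
        ((gam β₁ * gam β₂ * (1 + dot3 β₁ β₂)) • vcomp β₁ β₂) := by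
  rw [← mulVec_mulVec, boost_mulVec_timeAxis, boost_mulVec]
  congr 1
  · ext; simp only [dot3_eq_dotProduct, dotProduct_smul, smul_eq_mul]; ring
  · ext i
    simp only [vcomp, dot3_eq_dotProduct, dotProduct_smul, Pi.add_apply, Pi.smul_apply,
      smul_eq_mul] at hd ⊢
    field_simp
    ring

lemma boost_mul_indefiniteDiagonal_mul_boost {β : Fin 3 → ℝ} (h : dot3 β β < 1) :
    boost β * η * boost β = η := by
  refine ext_iff_mulVec.2 fun w => ?_
  obtain ⟨t, x, rfl⟩ : ∃ t x, w = Sum.elim (fun _ => t) x :=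
    ⟨w (.inl ()), w ∘ .inr, by ext (_ | _) <;> rfl⟩
  have hγ := gam_sq_mul_one_sub_dot3 h
  have hk := gam_sq_div_one_add_gam_mul_dot3 h
  have hk' : gam β ^ 2 / (1 + gam β) * (1 + gam β) = gam β ^ 2 :=
    div_mul_cancel₀ _ (by have := gam_pos_iff.2 h; positivity)
  simp only [← mulVec_mulVec, boost_mulVec, indefiniteDiagonal_mulVec]
  simp only [dot3_eq_dotProduct, dotProduct_neg, dotProduct_add, dotProduct_smul,
    smul_eq_mul] at hγ hk ⊢
  congr 1
  · ext
    linear_combination t * hγ - gam β * β ⬝ᵥ x * hk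
  · linear_combination (norm := module)
      ((-(t * gam β) - β ⬝ᵥ x * (gam β ^ 2 / (1 + gam β))) * hk - β ⬝ᵥ x * hk') • β

lemma rot_transpose (D : Matrix (Fin 3) (Fin 3) ℝ) : (rot D)ᵀ = rot Dᵀ := by
  simp [rot, fromBlocks_transpose]

lemma rot_mulVec (D : Matrix (Fin 3) (Fin 3) ℝ) (t : Unit → ℝ) (x : Fin 3 → ℝ) :
    rot D *ᵥ Sum.elim t x = Sum.elim t (D *ᵥ x) := by
  simp [rot, fromBlocks_mulVec]

lemma rot_transpose_mul_indefiniteDiagonal_mul_rot (D : Matrix (Fin 3) (Fin 3) ℝ) :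
    (rot D)ᵀ * η * rot D = fromBlocks 1 0 0 (-(Dᵀ * D)) := by
  simp [rot, indefiniteDiagonal_eq_fromBlocks, fromBlocks_transpose, fromBlocks_multiply]

lemma transpose_mul_self_eq_one_of_boost_mul_boost_eq {β₁ β₂ v : Fin 3 → ℝ}
    {D : Matrix (Fin 3) (Fin 3) ℝ} (h₁ : dot3 β₁ β₁ < 1) (h₂ : dot3 β₂ β₂ < 1)
    (hv : dot3 v v < 1) (hD : boost β₁ * boost β₂ = boost v * rot D) : Dᵀ * D = 1 := by
  have hprod : (boost β₁ * boost β₂)ᵀ * η * (boost β₁ * boost β₂) = η :=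
    calc (boost β₁ * boost β₂)ᵀ * η * (boost β₁ * boost β₂)
        = boost β₂ * (boost β₁ * η * boost β₁) * boost β₂ := by
          rw [transpose_mul, boost_transpose, boost_transpose]; simp only [Matrix.mul_assoc]
      _ = η := by
          rw [boost_mul_indefiniteDiagonal_mul_boost h₁, boost_mul_indefiniteDiagonal_mul_boost h₂]
  have hrot : (rot D)ᵀ * η * rot D = η :=
    calc (rot D)ᵀ * η * rot D = (rot D)ᵀ * (boost v * η * boost v) * rot D := by
          rw [boost_mul_indefiniteDiagonal_mul_boost hv]
      _ = (boost v * rot D)ᵀ * η * (boost v * rot D) := by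
          rw [transpose_mul, boost_transpose]; simp only [Matrix.mul_assoc]
      _ = η := by rw [← hD, hprod]
  rw [rot_transpose_mul_indefiniteDiagonal_mul_rot, indefiniteDiagonal_eq_fromBlocks,
    fromBlocks_inj] at hrot
  simpa using hrot.2.2.2

open Matrix in
/-- The Thomas rotation maps the oppositely composed velocity to the composed
velocity: `D · (β₂ ⋆ β₁) = β₁ ⋆ β₂`. -/
theorem thomas_rotation_maps_vcomp (β₁ β₂ : Fin 3 → ℝ)
    (h₁ : dot3 β₁ β₁ < 1) (h₂ : dot3 β₂ β₂ < 1)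
    (D : Matrix (Fin 3) (Fin 3) ℝ)
    (hD : boost β₁ * boost β₂ = boost (vcomp β₁ β₂) * rot D) :
    D *ᵥ vcomp β₂ β₁ = vcomp β₁ β₂ := by
  have hγ₂ := gam_pos_iff.2 h₂
  have hd := one_add_dot3_pos h₂ h₁
  have hc : 0 < gam β₂ * gam β₁ * (1 + dot3 β₂ β₁) := by
    have := gam_pos_iff.2 h₁; positivity
  have hDt : boost β₂ * boost β₁ = rot Dᵀ * boost (vcomp β₁ β₂) := by
    simpa only [transpose_mul, boost_transpose, rot_transpose] using congrArg transpose hD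
  have htime := congrArg (· *ᵥ Sum.elim (fun _ => (1 : ℝ)) 0) hDt
  rw [boost_mul_boost_mulVec_timeAxis hγ₂.ne' hd.ne', ← mulVec_mulVec, boost_mulVec_timeAxis,
    rot_mulVec] at htime
  have hγv : gam (vcomp β₁ β₂) = gam β₂ * gam β₁ * (1 + dot3 β₂ β₁) :=
    (congrFun htime (.inl ())).symm
  have hv : dot3 (vcomp β₁ β₂) (vcomp β₁ β₂) < 1 := gam_pos_iff.1 (hγv ▸ hc)
  have hDtv : Dᵀ *ᵥ vcomp β₁ β₂ = vcomp β₂ β₁ := by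
    have hspace := congrArg (· ∘ Sum.inr) htime
    simp only [Sum.elim_comp_inr, hγv, mulVec_smul] at hspace
    exact smul_right_injective _ hc.ne' hspace.symm
  have hDDt := mul_eq_one_comm.1 (transpose_mul_self_eq_one_of_boost_mul_boost_eq h₁ h₂ hv hD)
  rw [← hDtv, mulVec_mulVec, hDDt, one_mulVec]
end

section
/- Let n ≥ 2, let v, v' ∈ ℝⁿ be timelike (η(v,v) > 0 and η(v',v') > 0) and linearly independent, and let r, r' ∈ ℝⁿ. Then there exists a unique pair (λ, λ') ∈ ℝ × ℝ such that, setting q := r + λ•v and q' := r' + λ'•v', one has η(q − q', v) = 0 and η(q − q', v') = 0; i.e. on two non-parallel timelike lines there is exactly one pair of points each of which is Einstein-simultaneous with the other relative to the respective line. -/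
/-!
The two conditions are linear in `(λ, λ')`, with coefficient matrix built from the Gram
entries `a = η(v,v)`, `b = η(v,v')`, `c = η(v',v')` and determinant `b² - a c`. This determinant
is positive by the reversed Cauchy–Schwarz inequality: `w = v' - (b/a) v` is nonzero and
η-orthogonal to the timelike `v`, hence spacelike, and `η(w,w) = c - b²/a`.
-/

noncomputable section

/-- The Minkowski bilinear form on `ℝⁿ`:
`η(v,w) = v₀ w₀ − ∑_{i≠0} vᵢ wᵢ`. -/
def eta {n : ℕ} [NeZero n] (v w : Fin n → ℝ) : ℝ :=
  v 0 * w 0 - ∑ i ∈ Finset.univ.erase 0, v i * w i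

end

open Finset

namespace Minkowski

variable {n : ℕ} [NeZero n]

lemma eta_comm (v w : Fin n → ℝ) : eta v w = eta w v := by
  simp only [eta, mul_comm]

lemma eta_add_left (u v w : Fin n → ℝ) : eta (u + v) w = eta u w + eta v w := by
  simp only [eta, Pi.add_apply, add_mul, sum_add_distrib]
  ring

lemma eta_sub_left (u v w : Fin n → ℝ) : eta (u - v) w = eta u w - eta v w := by
  simp only [eta, Pi.sub_apply, sub_mul, sum_sub_distrib]
  ring

lemma eta_smul_left (s : ℝ) (v w : Fin n → ℝ) : eta (s • v) w = s * eta v w := by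
  simp only [eta, Pi.smul_apply, smul_eq_mul, mul_assoc, ← mul_sum]
  ring

lemma eta_self_neg_of_eta_eq_zero {v w : Fin n → ℝ} (hv : 0 < eta v v) (hvw : eta v w = 0)
    (hw : w ≠ 0) : eta w w < 0 := by
  set S := univ.erase (0 : Fin n)
  have hA : ∑ i ∈ S, v i * v i < v 0 * v 0 := sub_pos.mp hv
  have hp : v 0 * w 0 = ∑ i ∈ S, v i * w i := sub_eq_zero.mp hvw
  have hCS : (v 0 * w 0) ^ 2 ≤ (∑ i ∈ S, v i * v i) * ∑ i ∈ S, w i * w i := by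
    simpa only [hp, sq] using sum_mul_sq_le_sq_mul_sq S v w
  have hA0 : 0 ≤ ∑ i ∈ S, v i * v i := sum_nonneg fun i _ => mul_self_nonneg _
  have hs0 : 0 ≤ ∑ i ∈ S, w i * w i := sum_nonneg fun i _ => mul_self_nonneg _
  rcases hs0.eq_or_lt with hs | hs
  · exfalso
    have hspatial : ∀ i ∈ S, w i = 0 := fun i hi =>
      mul_self_eq_zero.mp ((sum_eq_zero_iff_of_nonneg fun i _ => mul_self_nonneg (w i)).mp
        hs.symm i hi)
    have hv0 : v 0 ≠ 0 := fun h => by simp only [h, mul_zero] at hA; exact hA.not_ge hA0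
    have hvw0 : (v 0 * w 0) ^ 2 = 0 :=
      le_antisymm (by simpa only [← hs, mul_zero] using hCS) (sq_nonneg _)
    have hw0 : w 0 = 0 :=
      (mul_eq_zero.mp (pow_eq_zero_iff two_ne_zero |>.mp hvw0)).resolve_left hv0
    refine hw (funext fun i => ?_)
    by_cases hi : i = 0
    · rw [hi, hw0, Pi.zero_apply]
    · exact hspatial i (mem_erase.mpr ⟨hi, mem_univ i⟩)
  · show w 0 * w 0 - ∑ i ∈ S, w i * w i < 0
    nlinarith [mul_lt_mul_of_pos_right hA hs]

lemma eta_mul_eta_lt_sq {v w : Fin n → ℝ} (hv : 0 < eta v v)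
    (hind : LinearIndependent ℝ ![v, w]) : eta v v * eta w w < eta v w ^ 2 := by
  set a := eta v v
  set b := eta v w
  have hwv : eta w v = b := eta_comm w v
  have hw'_ne : w - (b / a) • v ≠ 0 := by
    intro h
    have := (LinearIndependent.pair_iff.mp hind) (-(b / a)) 1 (by rw [← h]; module)
    exact one_ne_zero this.2
  have horth : eta v (w - (b / a) • v) = 0 := by
    rw [eta_comm, eta_sub_left, eta_smul_left, hwv]
    field_simp
    ring
  have hneg := eta_self_neg_of_eta_eq_zero hv horth hw'_ne
  have hexpand : eta (w - (b / a) • v) (w - (b / a) • v) = eta w w - b ^ 2 / a := by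
    rw [eta_sub_left, eta_smul_left, eta_comm w, eta_comm v, eta_sub_left, eta_sub_left,
      eta_smul_left, eta_smul_left, hwv]
    field_simp
    ring
  rw [hexpand, sub_neg, lt_div_iff₀ hv] at hneg
  linarith

end Minkowski

lemma existsUnique_linear_system {a b c d e f : ℝ} (hdet : a * d - b * c ≠ 0) :
    ∃! p : ℝ × ℝ, a * p.1 + b * p.2 + e = 0 ∧ c * p.1 + d * p.2 + f = 0 := by
  refine ⟨((b * f - d * e) / (a * d - b * c), (c * e - a * f) / (a * d - b * c)), ?_, ?_⟩
  · exact ⟨by linear_combination (-e) * mul_inv_cancel₀ hdet,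
      by linear_combination (-f) * mul_inv_cancel₀ hdet⟩
  · rintro ⟨x, y⟩ ⟨h₁, h₂⟩
    rw [Prod.mk.injEq, eq_div_iff hdet, eq_div_iff hdet]
    exact ⟨by linear_combination d * h₁ - b * h₂, by linear_combination a * h₂ - c * h₁⟩

open Minkowski in
theorem mutual_einstein_simultaneity_general {n : ℕ} [NeZero n]
    (v v' r r' : Fin n → ℝ) (hv : 0 < eta v v)
    (hind : LinearIndependent ℝ ![v, v']) :
    ∃! ll : ℝ × ℝ,
      eta ((r + ll.1 • v) - (r' + ll.2 • v')) v = 0 ∧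
      eta ((r + ll.1 • v) - (r' + ll.2 • v')) v' = 0 := by
  have hexpand : ∀ (ll : ℝ × ℝ) w, eta ((r + ll.1 • v) - (r' + ll.2 • v')) w
      = eta v w * ll.1 + -eta v' w * ll.2 + eta (r - r') w := by
    intro ll w
    rw [show (r + ll.1 • v) - (r' + ll.2 • v') = ll.1 • v - ll.2 • v' + (r - r') by abel,
      eta_add_left, eta_sub_left, eta_smul_left, eta_smul_left]
    ring
  have hdet : eta v v * -eta v' v' - -eta v' v * eta v v' ≠ 0 := by
    have := eta_mul_eta_lt_sq hv hind
    rw [eta_comm v' v]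
    linarith
  simp only [hexpand]
  exact existsUnique_linear_system hdet

/-- On two non-parallel timelike lines there is exactly one pair of points,
each Einstein-simultaneous with the other relative to the respective line. -/
theorem mutual_einstein_simultaneity {n : ℕ} [NeZero n] (hn : 2 ≤ n)
    (v v' r r' : Fin n → ℝ) (hv : 0 < eta v v) (hv' : 0 < eta v' v')
    (hind : LinearIndependent ℝ ![v, v']) :
    ∃! ll : ℝ × ℝ,
      eta ((r + ll.1 • v) - (r' + ll.2 • v')) v = 0 ∧
      eta ((r + ll.1 • v) - (r' + ll.2 • v')) v' = 0 :=
  mutual_einstein_simultaneity_general v v' r r' hv hind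
end
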